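/- Let m ≥ 2 be an integer and 0 < s < 1. Then H^m(s) is equal to the convex hull of the union ∪_{l=1}^m V_l^m(s) of the m open rectangles V_l^m(s). -/

import Mathlib

open scoped ENNReal

/-- The region `H^m(s)`. -/
def Hset (m : ℕ) (s : ℝ) : Set (Fin m → ℝ) :=
  {t | (∀ j, t j ∈ Set.Ioo (0 : ℝ) 1) ∧
    ∀ J : Finset (Fin m), -(1 - s) < ∑ j ∈ J, (s - t j)}

/-- The open rectangle `𝒱_l^m(s)`. -/
def Vrect (m : ℕ) (l : Fin m) (s : ℝ) : Set (Fin m → ℝ) :=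
  {t | (0 < t l ∧ t l < 1) ∧ ∀ j, j ≠ l → 0 < t j ∧ t j < s}

/-!
`H^m(s)` is an intersection of convex sets containing every rectangle `V_l`, which gives one
inclusion. Conversely, for `t ∈ H^m(s)` the subset condition for `J = {j | s < t j}` says that the
normalised excesses `(t j - s)⁺ / (1 - s)` sum to less than `1`, so there are convex weights `μ j`
strictly above them. Then `t j < μ j * 1 + (1 - μ j) * s`, and shrinking the two endpoints by the
same factor writes `t j = μ j * c j + (1 - μ j) * d j` with `c j ∈ (0, 1)`, `d j ∈ (0, s)`. Hence
`t = ∑ l, μ l • p l`, where `p l ∈ V_l` has coordinate `c l` at `l` and `d j` elsewhere.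
-/

open Finset Set

lemma convex_Hset (m : ℕ) (s : ℝ) : Convex ℝ (Hset m s) := by
  intro x hx y hy a b ha hb hab
  refine ⟨fun j => convex_Ioo 0 1 (hx.1 j) (hy.1 j) ha hb hab, fun J => ?_⟩
  have hsum : ∑ j ∈ J, (s - (a • x + b • y) j)
      = a • ∑ j ∈ J, (s - x j) + b • ∑ j ∈ J, (s - y j) := by
    simp only [Pi.add_apply, Pi.smul_apply, smul_eq_mul, mul_sum, ← sum_add_distrib]
    refine sum_congr rfl fun j _ => ?_
    linear_combination -s * hab
  rw [hsum]
  exact convex_Ioi (-(1 - s)) (hx.2 J) (hy.2 J) ha hb hab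

lemma Vrect_subset_Hset {m : ℕ} (l : Fin m) {s : ℝ} (hs : s < 1) : Vrect m l s ⊆ Hset m s := by
  rintro t ⟨htl, hto⟩
  refine ⟨fun j => ?_, fun J => ?_⟩
  · by_cases h : j = l
    · exact h ▸ htl
    · exact ⟨(hto j h).1, (hto j h).2.trans hs⟩
  · have hrest : 0 ≤ ∑ j ∈ J.erase l, (s - t j) :=
      sum_nonneg fun j hj => sub_nonneg.2 (hto j (ne_of_mem_erase hj)).2.le
    by_cases hlJ : l ∈ J
    · rw [← add_sum_erase J _ hlJ]
      linarith [htl.2]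
    · rw [← erase_eq_of_notMem hlJ]
      linarith

lemma exists_sum_eq_one_and_lt {ι : Type*} [Fintype ι] [Nonempty ι] {w : ι → ℝ}
    (hw : ∑ i, w i < 1) : ∃ μ : ι → ℝ, (∀ i, w i < μ i) ∧ ∑ i, μ i = 1 := by
  have hcard : (0 : ℝ) < Fintype.card ι := Nat.cast_pos.2 Fintype.card_pos
  refine ⟨fun i => w i + (1 - ∑ j, w j) / Fintype.card ι, fun i => ?_, ?_⟩
  · linarith [div_pos (sub_pos.2 hw) hcard]
  · rw [sum_add_distrib, sum_const, card_univ, nsmul_eq_mul]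
    field_simp
    ring

lemma exists_mem_Ioo_mul_add_mul_eq {μ a b x : ℝ} (ha : 0 < a) (hb : 0 < b) (hx0 : 0 < x)
    (hx : x < μ * b + (1 - μ) * a) :
    ∃ c ∈ Set.Ioo 0 b, ∃ d ∈ Set.Ioo 0 a, μ * c + (1 - μ) * d = x := by
  set D := μ * b + (1 - μ) * a
  have hD : 0 < D := hx0.trans hx
  have hk : x / D ∈ Set.Ioo 0 1 := ⟨div_pos hx0 hD, (div_lt_one hD).2 hx⟩
  refine ⟨x / D * b, ⟨by nlinarith [hk.1], by nlinarith [hk.2]⟩,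
    x / D * a, ⟨by nlinarith [hk.1], by nlinarith [hk.2]⟩, ?_⟩
  field_simp
  ring

lemma mem_convexHull_Vrect_of_lt {m : ℕ} {s : ℝ} (hs : 0 < s) {μ : Fin m → ℝ}
    (hμ0 : ∀ l, 0 ≤ μ l) (hμ : ∑ l, μ l = 1) {t : Fin m → ℝ} (ht0 : ∀ j, 0 < t j)
    (ht : ∀ j, t j < μ j + (1 - μ j) * s) : t ∈ convexHull ℝ (⋃ l, Vrect m l s) := by
  choose c hc d hd hcd using fun j =>
    exists_mem_Ioo_mul_add_mul_eq hs one_pos (ht0 j) (by simpa using ht j)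
  have hp : ∀ l, Function.update d l (c l) ∈ ⋃ l, Vrect m l s := fun l =>
    mem_iUnion.2 ⟨l, by simpa using hc l, fun j hj => by simpa [hj] using hd j⟩
  have ht_eq : t = ∑ l, μ l • Function.update d l (c l) := by
    funext j
    simp only [Finset.sum_apply, Pi.smul_apply, Function.update_apply, smul_eq_mul]
    calc t j = μ j * c j + (1 - μ j) * d j := (hcd j).symm
      _ = ∑ l, (μ l * d j + if j = l then μ j * (c j - d j) else 0) := by
        rw [sum_add_distrib, ← sum_mul, hμ, sum_ite_eq, if_pos (Finset.mem_univ j)]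
        ring
      _ = _ := sum_congr rfl fun l _ => by
        split_ifs with h
        · subst h; ring
        · rw [add_zero]
  rw [ht_eq]
  exact (convex_convexHull ℝ _).sum_mem (fun l _ => hμ0 l) hμ
    fun l _ => subset_convexHull ℝ _ (hp l)

lemma Hset_subset_convexHull {m : ℕ} (hm : m ≠ 0) {s : ℝ} (hs0 : 0 < s) (hs1 : s < 1) :
    Hset m s ⊆ convexHull ℝ (⋃ l, Vrect m l s) := by
  rintro t ⟨htI, htJ⟩
  have h1s : 0 < 1 - s := sub_pos.2 hs1
  set e : Fin m → ℝ := fun j => if s < t j then t j - s else 0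
  have he0 : ∀ j, 0 ≤ e j := fun j => by simp only [e]; split_ifs <;> linarith
  have hte : ∀ j, t j - s ≤ e j := fun j => by simp only [e]; split_ifs <;> linarith
  have he : ∑ j, e j < 1 - s := by
    have h := htJ (univ.filter fun j => s < t j)
    rw [sum_filter] at h
    have hneg : ∑ j, e j = -∑ j, (if s < t j then s - t j else 0) := by
      rw [← sum_neg_distrib]
      exact sum_congr rfl fun j _ => by simp only [e]; split_ifs <;> ring
    linarith
  have : Nonempty (Fin m) := ⟨⟨0, Nat.pos_of_ne_zero hm⟩⟩
  obtain ⟨μ, hμe, hμ⟩ := exists_sum_eq_one_and_lt (w := fun j => e j / (1 - s)) <| by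
    rwa [← sum_div, div_lt_one h1s]
  refine mem_convexHull_Vrect_of_lt hs0 (fun l => (div_nonneg (he0 l) h1s.le).trans (hμe l).le) hμ
    (fun j => (htI j).1) fun j => ?_
  linarith [hte j, (div_lt_iff₀ h1s).1 (hμe j)]

/-- for `0 < s < 1`, the region `H^m(s)` is the convex hull of the union
of the rectangles `𝒱_l^m(s)`, `l = 1,…,m`. -/
theorem statement19 (m : ℕ) (hm : 2 ≤ m) (s : ℝ) (hs0 : 0 < s) (hs1 : s < 1) :
    Hset m s = convexHull ℝ (⋃ l : Fin m, Vrect m l s) :=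
  (Hset_subset_convexHull (by omega) hs0 hs1).antisymm <|
    convexHull_min (iUnion_subset fun l => Vrect_subset_Hset l hs1) (convex_Hset m s)
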